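/- arXiv:1608.03779 — 2 statements merged into one kernel-verified Lean document; each statement's English description precedes it below -/
import Mathlib

section
/- For any n ∈ ℤ and real x with |x| ≤ 1, cos(2n·arcsin(x)) = F(n, -n; 1/2; x²), where F is the Gauss hypergeometric function (a terminating polynomial since n, -n are integer parameters of opposite signs). -/
/-!
Since `cos (2nθ) = Tₙ (cos 2θ) = Tₙ (1 - 2 sin² θ)` for the Chebyshev polynomial `Tₙ`, it suffices to
show `Tₙ (1 - 2y) = F(n, -n; 1/2; y)`. Both sides satisfy `P_{m+1} + P_{m-1} = 2 (1 - 2y) P_m`: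
on the hypergeometric side this is, coefficientwise, a three-term identity for `(m)ₖ (-m)ₖ`, which
follows from the shifts `(a)ₖ₊₁ = (a)ₖ (a + k) = a (a + 1)ₖ` after multiplying through by `m`.
-/

/-- The Pochhammer symbol `(a)_k = a (a+1) ⋯ (a+k-1)`. -/
def poch (a : ℝ) (k : ℕ) : ℝ := ∏ i ∈ Finset.range k, (a + i)

open Finset Polynomial Polynomial.Chebyshev

theorem poch_succ (a : ℝ) (k : ℕ) : poch a (k + 1) = poch a k * (a + k) :=
  prod_range_succ _ _

theorem poch_succ' (a : ℝ) (k : ℕ) : poch a (k + 1) = a * poch (a + 1) k := by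
  rw [poch, prod_range_succ', mul_comm, poch]
  push_cast
  simp only [add_zero, add_assoc, add_comm (1 : ℝ)]

@[fun_prop]
theorem continuous_poch (k : ℕ) : Continuous (poch · k) := by
  unfold poch; fun_prop

theorem poch_half_pos (k : ℕ) : 0 < poch (1 / 2) k :=
  prod_pos fun i _ => by positivity

theorem mul_poch_add_one_mul_poch_neg (m : ℝ) (k : ℕ) :
    m * (poch (m + 1) (k + 1) * poch (-(m + 1)) (k + 1)) =
      -((m + 1) * (m + k) * (m + k + 1)) * (poch m k * poch (-m) k) := by
  have h := poch_succ' m k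
  rw [poch_succ] at h
  rw [poch_succ (m + 1), poch_succ' (-(m + 1)), show -(m + 1) + 1 = -m by ring]
  linear_combination ((m + 1) * (m + k + 1) * poch (-m) k) * h

theorem poch_mul_poch_neg_add_one_add_sub_one (m : ℝ) (k : ℕ) :
    poch (m + 1) (k + 1) * poch (-(m + 1)) (k + 1) +
        poch (m - 1) (k + 1) * poch (-(m - 1)) (k + 1) =
      2 * (poch m (k + 1) * poch (-m) (k + 1)) -
        2 * (k + 1) * (2 * k + 1) * (poch m k * poch (-m) k) := by
  -- The identity is obtained multiplied by `m`; both sides are continuous, which settles `m = 0`.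
  revert m
  rw [← funext_iff]
  refine Continuous.ext_on (dense_compl_singleton 0) (by fun_prop) (by fun_prop) fun m hm => ?_
  apply mul_left_cancel₀ (show m ≠ 0 from hm)
  have hup := mul_poch_add_one_mul_poch_neg m k
  have hdown := mul_poch_add_one_mul_poch_neg (-m) k
  rw [neg_neg, mul_comm (poch (-m) k), show -m + 1 = -(m - 1) by ring, neg_neg] at hdown
  simp only [poch_succ] at *
  linear_combination hup - hdown

noncomputable def hypergeomCoeff (m : ℝ) (k : ℕ) : ℝ :=
  poch m k * poch (-m) k / (poch (1 / 2) k * k.factorial)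

theorem hypergeomCoeff_zero (m : ℝ) : hypergeomCoeff m 0 = 1 := by
  simp [hypergeomCoeff, poch]

theorem hypergeomCoeff_natCast_of_lt {M k : ℕ} (h : M < k) : hypergeomCoeff M k = 0 := by
  have : poch (-M) k = 0 := prod_eq_zero (mem_range.2 h) (neg_add_cancel _)
  rw [hypergeomCoeff, this, mul_zero, zero_div]

theorem hypergeomCoeff_neg (m : ℝ) (k : ℕ) : hypergeomCoeff (-m) k = hypergeomCoeff m k := by
  rw [hypergeomCoeff, hypergeomCoeff, neg_neg, mul_comm (poch (-m) k)]

theorem hypergeomCoeff_abs (m : ℝ) (k : ℕ) : hypergeomCoeff |m| k = hypergeomCoeff m k := by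
  rcases abs_choice m with h | h <;> rw [h]
  exact hypergeomCoeff_neg m k

theorem hypergeomCoeff_add_one_add_sub_one (m : ℝ) (k : ℕ) :
    hypergeomCoeff (m + 1) (k + 1) + hypergeomCoeff (m - 1) (k + 1) =
      2 * hypergeomCoeff m (k + 1) - 4 * hypergeomCoeff m k := by
  have := poch_half_pos k
  simp only [hypergeomCoeff, poch_succ (1 / 2), Nat.factorial_succ]
  push_cast
  field_simp
  linear_combination 2 * poch_mul_poch_neg_add_one_add_sub_one m k

theorem sum_hypergeomCoeff_add_one_add_sub_one (m y : ℝ) (N : ℕ) :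
    ∑ k ∈ range (N + 1), hypergeomCoeff (m + 1) k * y ^ k +
        ∑ k ∈ range (N + 1), hypergeomCoeff (m - 1) k * y ^ k =
      2 * ∑ k ∈ range (N + 1), hypergeomCoeff m k * y ^ k -
        4 * y * ∑ k ∈ range N, hypergeomCoeff m k * y ^ k := by
  have shifted : ∑ k ∈ range N, hypergeomCoeff (m + 1) (k + 1) * y ^ (k + 1) +
        ∑ k ∈ range N, hypergeomCoeff (m - 1) (k + 1) * y ^ (k + 1) =
      2 * ∑ k ∈ range N, hypergeomCoeff m (k + 1) * y ^ (k + 1) -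
        4 * y * ∑ k ∈ range N, hypergeomCoeff m k * y ^ k := by
    rw [mul_sum, mul_sum, ← sum_add_distrib, ← sum_sub_distrib]
    refine sum_congr rfl fun k _ => ?_
    linear_combination y ^ (k + 1) * hypergeomCoeff_add_one_add_sub_one m k
  simp only [sum_range_succ' _ N, hypergeomCoeff_zero]
  linear_combination shifted

theorem sum_hypergeomCoeff_natCast_eq {M N : ℕ} (h : M < N) (y : ℝ) :
    ∑ k ∈ range N, hypergeomCoeff M k * y ^ k =
      ∑ k ∈ range (M + 1), hypergeomCoeff M k * y ^ k :=
  (sum_subset (range_subset_range.2 h) fun k _ hk => by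
    rw [hypergeomCoeff_natCast_of_lt (by simpa using hk), zero_mul]).symm

namespace Polynomial.Chebyshev

-- Every truncation length `N > M` is allowed, so that the recurrence can compare sums of lengths
-- `N` and `N + 1` without tracking vanishing top coefficients.
theorem T_eval_one_sub_two_mul_natCast (y : ℝ) (M : ℕ) :
    ∀ N, M < N → (T ℝ M).eval (1 - 2 * y) = ∑ k ∈ range N, hypergeomCoeff M k * y ^ k := by
  induction M using Nat.twoStepInduction with
  | zero =>
    intro N hN
    rw [sum_hypergeomCoeff_natCast_eq hN]
    simp [hypergeomCoeff_zero]
  | one =>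
    intro N hN
    rw [sum_hypergeomCoeff_natCast_eq hN]
    norm_num [sum_range_succ, hypergeomCoeff, poch]
    ring
  | more M ih₀ ih₁ =>
    rintro (_ | N) hN
    · omega
    have hsum := sum_hypergeomCoeff_add_one_add_sub_one (M + 1) y N
    rw [add_sub_cancel_right, add_assoc, one_add_one_eq_two] at hsum
    push_cast at ih₁ ⊢
    rw [T_add_two, eval_sub, eval_mul, eval_mul, eval_X, eval_ofNat]
    linear_combination 2 * ih₁ (N + 1) (by omega) - 4 * y * ih₁ N (by omega) -
      ih₀ (N + 1) (by omega) - hsum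

theorem T_eval_one_sub_two_mul (n : ℤ) (y : ℝ) :
    (T ℝ n).eval (1 - 2 * y) = ∑ k ∈ range (n.natAbs + 1), hypergeomCoeff n k * y ^ k := by
  rw [← T_natAbs, T_eval_one_sub_two_mul_natCast y _ _ (Nat.lt_succ_self _), Nat.cast_natAbs,
    Int.cast_abs]
  simp only [hypergeomCoeff_abs]

end Polynomial.Chebyshev

/-- For any `n ∈ ℤ` and real `x` with `|x| ≤ 1`, `cos(2n arcsin x) = F(n, -n; 1/2; x²)`,
the Gauss hypergeometric series terminating as a polynomial of degree `|n|` in `x²`. -/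
theorem cos_arcsin_hypergeometric (n : ℤ) (x : ℝ) (hx : |x| ≤ 1) :
    Real.cos (2 * n * Real.arcsin x) =
      ∑ k ∈ Finset.range (n.natAbs + 1),
        poch n k * poch (-n) k / (poch (1/2) k * k.factorial) * x ^ (2 * k) := by
  have hsin : Real.sin (Real.arcsin x) = x := Real.sin_arcsin (abs_le.1 hx).1 (abs_le.1 hx).2
  calc Real.cos (2 * n * Real.arcsin x) = (T ℝ n).eval (Real.cos (2 * Real.arcsin x)) := by
        rw [T_real_cos, mul_left_comm, mul_assoc]
    _ = (T ℝ n).eval (1 - 2 * x ^ 2) := by rw [Real.cos_two_mul_eq_one_sub, hsin]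
    _ = _ := by simp only [T_eval_one_sub_two_mul, hypergeomCoeff, pow_mul]
end

section
/- Let p, q ≥ 0 with p + q = d ≥ 1, and let E(w) = (i^q/(2^d π^{d/2})) Σ_{k≥0} (-w/4)^k/(k! Γ(k+d/2)). For every z ∈ ℂ, the function u(x) = E(z(x'² - x''²)) on ℝ^d, where x = (x', x'') ∈ ℝ^p × ℝ^q, x'² = x₁²+⋯+x_p², x''² = x_{p+1}²+⋯+x_d², satisfies the eigenequation (-□ - z)u = 0, where □ = ∂₁² + ⋯ + ∂_p² - ∂_{p+1}² - ⋯ - ∂_d² is the ultra-hyperbolic operator. -/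
/-!
Write `₀F̃₁(b; w) = ∑ₙ wⁿ / (n! Γ(b + n))` for Mathlib's regularized hypergeometric function
`regularizedHGFun 0 {b}`, so that `E(w) = C · ₀F̃₁(d/2; -w/4)`. Termwise differentiation gives
`₀F̃₁(b; ·)' = ₀F̃₁(b + 1; ·)`, and the Gamma recurrence `1/Γ(s) = s/Γ(s + 1)` gives
`w ₀F̃₁(b + 2; w) + b ₀F̃₁(b + 1; w) = ₀F̃₁(b; w)`; hence `4wE'' + 2dE' + E = 0`.
For `u = E(zQ)` with `Q(x) = ∑ εⱼ xⱼ²`, `εⱼ = ±1`, the chain rule gives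
`∑ εⱼ ∂ⱼ²u = z (2d E'(zQ) + 4zQ E''(zQ))`, which by the differential equation is `-z u`.
-/

open Complex ContinuousLinearMap

namespace FormalMultilinearSeries

variable {𝕜 : Type*} [NontriviallyNormedField 𝕜] [CompleteSpace 𝕜] {c : ℕ → 𝕜}

theorem hasSum_ofScalarsSum (h : (ofScalars 𝕜 c).radius = ⊤) (x : 𝕜) :
    HasSum (fun n ↦ c n * x ^ n) (ofScalarsSum c x) := by
  have := (ofScalars 𝕜 c).hasSum (x := x) (by simp [h])
  simp only [ofScalars_apply_eq, smul_eq_mul] at this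
  exact this

theorem hasFPowerSeriesOnBall_ofScalarsSum (h : (ofScalars 𝕜 c).radius = ⊤) :
    HasFPowerSeriesOnBall (ofScalarsSum c) (ofScalars 𝕜 c) 0 ⊤ := by
  have := (ofScalars 𝕜 c).hasFPowerSeriesOnBall (by simp [h])
  rw [h] at this
  exact this

theorem hasDerivAt_ofScalarsSum (h : (ofScalars 𝕜 c).radius = ⊤) (x : 𝕜) :
    HasDerivAt (ofScalarsSum c) (ofScalarsSum (fun n ↦ (n + 1) * c (n + 1)) x) x := by
  have hf := hasFPowerSeriesOnBall_ofScalarsSum h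
  have hx : x ∈ Metric.eball (0 : 𝕜) ⊤ := by simp
  have hsum := (ContinuousLinearMap.apply 𝕜 𝕜 (1 : 𝕜)).hasSum (hf.fderiv.hasSum (y := x) hx)
  simp only [zero_add, ContinuousLinearMap.apply_apply] at hsum
  refine ((hf.differentiableOn x hx).differentiableAt
    (Metric.isOpen_eball.mem_nhds hx)).hasDerivAt.congr_deriv ?_
  rw [ofScalars_sum_eq, ← fderiv_apply_one_eq_deriv, ← hsum.tsum_eq]
  congr 1 with n
  rw [apply_eq_pow_smul_coeff, _root_.smul_apply, derivSeries_coeff_one, coeff_ofScalars,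
    nsmul_eq_mul, smul_eq_mul, smul_eq_mul]
  push_cast
  ring

end FormalMultilinearSeries

namespace Complex

open scoped Nat

theorem regularizedHGFunCoeff_zero_singleton (b : ℂ) (n : ℕ) :
    regularizedHGFunCoeff 0 {b} n = (n ! * Gamma (b + n))⁻¹ := by
  simp [regularizedHGFunCoeff]

theorem succ_mul_regularizedHGFunCoeff_zero_singleton_succ (b : ℂ) (n : ℕ) :
    (n + 1) * regularizedHGFunCoeff 0 {b} (n + 1) = regularizedHGFunCoeff 0 {b + 1} n := by
  have hn : (n + 1 : ℂ) ≠ 0 := n.cast_add_one_ne_zero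
  simp only [regularizedHGFunCoeff_zero_singleton, Nat.factorial_succ]
  push_cast
  rw [show b + ((n : ℂ) + 1) = b + 1 + n by ring]
  field_simp

theorem regularizedHGFunCoeff_zero_singleton_eq_mul_add_one (b : ℂ) (n : ℕ) :
    regularizedHGFunCoeff 0 {b} n = (b + n) * regularizedHGFunCoeff 0 {b + 1} n := by
  simp only [regularizedHGFunCoeff_zero_singleton, mul_inv,
    one_div_Gamma_eq_self_mul_one_div_Gamma_add_one (b + n), add_right_comm b 1]
  ring

theorem radius_regularizedHGFunSeries_zero_singleton (b : ℂ) :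
    (regularizedHGFunSeries 0 {b}).radius = ⊤ :=
  radius_regularizedHGFunSeries_eq_top (by simp)

theorem hasSum_regularizedHGFun_zero_singleton (b w : ℂ) :
    HasSum (fun n ↦ regularizedHGFunCoeff 0 {b} n * w ^ n) (regularizedHGFun 0 {b} w) :=
  FormalMultilinearSeries.hasSum_ofScalarsSum (radius_regularizedHGFunSeries_zero_singleton b) w

theorem hasDerivAt_regularizedHGFun_zero_singleton (b w : ℂ) :
    HasDerivAt (regularizedHGFun 0 {b}) (regularizedHGFun 0 {b + 1} w) w := by
  refine (FormalMultilinearSeries.hasDerivAt_ofScalarsSum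
    (radius_regularizedHGFunSeries_zero_singleton b) w).congr_deriv ?_
  simp only [succ_mul_regularizedHGFunCoeff_zero_singleton_succ]
  rfl

theorem hasDerivAt_regularizedHGFun_zero_singleton_const_mul (b a w : ℂ) :
    HasDerivAt (fun w ↦ regularizedHGFun 0 {b} (a * w))
      (a * regularizedHGFun 0 {b + 1} (a * w)) w := by
  have h := (hasDerivAt_regularizedHGFun_zero_singleton b (a * w)).comp w
    ((hasDerivAt_id w).const_mul a)
  simp only [Function.comp_def, mul_one] at h
  rwa [mul_comm] at h

theorem regularizedHGFun_zero_singleton_contiguous (b w : ℂ) :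
    w * regularizedHGFun 0 {b + 2} w + b * regularizedHGFun 0 {b + 1} w =
      regularizedHGFun 0 {b} w := by
  have hshift : HasSum (fun n : ℕ ↦ n * regularizedHGFunCoeff 0 {b + 1} n * w ^ n)
      (w * regularizedHGFun 0 {b + 2} w) := by
    have h := (hasSum_regularizedHGFun_zero_singleton (b + 1 + 1) w).mul_left w
    simp only [← succ_mul_regularizedHGFunCoeff_zero_singleton_succ (b + 1)] at h
    rw [add_assoc, one_add_one_eq_two] at h
    refine (hasSum_nat_add_iff' 1).mp ?_
    rw [Finset.sum_range_one, Nat.cast_zero, zero_mul, zero_mul, sub_zero]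
    refine h.congr_fun fun n ↦ ?_
    push_cast
    ring
  refine (hshift.add ((hasSum_regularizedHGFun_zero_singleton (b + 1) w).mul_left b)).unique ?_
  convert hasSum_regularizedHGFun_zero_singleton b w using 2 with n
  rw [regularizedHGFunCoeff_zero_singleton_eq_mul_add_one b n]
  ring

end Complex

theorem fderiv_fderiv_comp_apply {E : Type*} [NormedAddCommGroup E] [NormedSpace ℝ E]
    {φ φ' φ'' : ℂ → ℂ} {g : E → ℂ} {g' : E → E →L[ℝ] ℂ} {g'' : E →L[ℝ] ℂ} {x v : E}
    (hφ : ∀ w, HasDerivAt φ (φ' w) w) (hφ' : HasDerivAt φ' (φ'' (g x)) (g x))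
    (hg : ∀ y, HasFDerivAt g (g' y) y) (hg' : HasFDerivAt (fun y ↦ g' y v) g'' x) :
    fderiv ℝ (fun y ↦ fderiv ℝ (fun y ↦ φ (g y)) y v) x v =
      φ'' (g x) * g' x v ^ 2 + φ' (g x) * g'' v := by
  have hfirst : (fun y ↦ fderiv ℝ (fun y ↦ φ (g y)) y v) = fun y ↦ φ' (g y) * g' y v := by
    ext y
    have h : HasFDerivAt (fun y ↦ φ (g y)) (φ' (g y) • g' y) y :=
      (hφ (g y)).comp_hasFDerivAt y (hg y)
    rw [h.fderiv]
    rfl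
  have hφ'g : HasFDerivAt (fun y ↦ φ' (g y)) (φ'' (g x) • g' x) x := hφ'.comp_hasFDerivAt x (hg x)
  rw [hfirst, (hφ'g.fun_mul hg').fderiv]
  simp only [add_apply, smul_apply, smul_eq_mul]
  ring

section SignedSumSq

variable {ι : Type*} [Fintype ι]

def signedSumSq (ε : ι → ℂ) (y : ι → ℝ) : ℂ := ∑ i, ε i * ((y i ^ 2 : ℝ) : ℂ)

theorem hasFDerivAt_signedSumSq (ε : ι → ℂ) (y : ι → ℝ) :
    HasFDerivAt (signedSumSq ε) (∑ i, (2 * ε i * y i) • (ofRealCLM ∘L proj i)) y := by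
  refine HasFDerivAt.fun_sum fun i _ ↦ ?_
  refine ((ofRealCLM.hasFDerivAt.comp y ((hasFDerivAt_apply i y).pow 2)).const_mul
    (ε i)).congr_fderiv ?_
  ext v
  simp only [Nat.add_one_sub_one, pow_one, nsmul_eq_mul, comp_smulₛₗ, Real.ringHom_apply,
    smul_apply, comp_apply, proj_apply, ofRealCLM_apply, real_smul, ofReal_mul, smul_eq_mul]
  push_cast
  ring

variable [DecidableEq ι] {ε : ι → ℂ} {φ φ' φ'' : ℂ → ℂ}

theorem sum_mul_fderiv_fderiv_comp_signedSumSq (hε : ∀ i, ε i ^ 2 = 1)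
    (hφ : ∀ w, HasDerivAt φ (φ' w) w) (hφ' : ∀ w, HasDerivAt φ' (φ'' w) w) (z : ℂ)
    (x : ι → ℝ) :
    ∑ j, ε j * fderiv ℝ (fun y ↦ fderiv ℝ (fun y ↦ φ (z * signedSumSq ε y)) y (Pi.single j 1))
        x (Pi.single j 1) =
      z * (2 * Fintype.card ι * φ' (z * signedSumSq ε x) +
        4 * (z * signedSumSq ε x) * φ'' (z * signedSumSq ε x)) := by
  set L : (ι → ℝ) → (ι → ℝ) →L[ℝ] ℂ := fun y ↦ z • ∑ i, (2 * ε i * y i) • (ofRealCLM ∘L proj i)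
  have hg (y : ι → ℝ) : HasFDerivAt (fun y ↦ z * signedSumSq ε y) (L y) y :=
    (hasFDerivAt_signedSumSq ε y).const_mul z
  have hL (y : ι → ℝ) (j : ι) : L y (Pi.single j 1) = 2 * z * ε j * y j := by
    simp only [L, smul_apply, sum_apply, comp_apply, proj_apply, Pi.single_apply, ofRealCLM_apply,
      apply_ite ((↑) : ℝ → ℂ), ofReal_one, ofReal_zero, smul_eq_mul, mul_ite, mul_one, mul_zero,
      Finset.sum_ite_eq', Finset.mem_univ, if_true]
    ring
  have hL' (j : ι) : HasFDerivAt (fun y ↦ L y (Pi.single j 1))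
      ((2 * z * ε j) • (ofRealCLM ∘L (proj j : (ι → ℝ) →L[ℝ] ℝ))) x := by
    simp only [hL]
    exact (ofRealCLM ∘L (proj j : (ι → ℝ) →L[ℝ] ℝ)).hasFDerivAt.const_mul (2 * z * ε j)
  have hterm (j : ι) : ε j * fderiv ℝ (fun y ↦ fderiv ℝ (fun y ↦ φ (z * signedSumSq ε y)) y
      (Pi.single j 1)) x (Pi.single j 1) = 2 * z * φ' (z * signedSumSq ε x) +
        4 * z ^ 2 * φ'' (z * signedSumSq ε x) * (ε j * ((x j ^ 2 : ℝ) : ℂ)) := by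
    rw [fderiv_fderiv_comp_apply hφ (hφ' _) hg (hL' j), hL]
    simp only [smul_apply, comp_apply, proj_apply, Pi.single_eq_same, ofRealCLM_apply,
      ofReal_one, smul_eq_mul, ofReal_pow]
    linear_combination (2 * z * φ' (z * signedSumSq ε x) +
      4 * z ^ 2 * φ'' (z * signedSumSq ε x) * ε j * x j ^ 2) * hε j
  rw [Finset.sum_congr rfl fun j _ ↦ hterm j, Finset.sum_add_distrib, ← Finset.mul_sum,
    Finset.sum_const, Finset.card_univ, nsmul_eq_mul, ← Finset.mul_sum]
  unfold signedSumSq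
  ring

theorem neg_sum_mul_fderiv_fderiv_comp_signedSumSq (hε : ∀ i, ε i ^ 2 = 1)
    (hφ : ∀ w, HasDerivAt φ (φ' w) w) (hφ' : ∀ w, HasDerivAt φ' (φ'' w) w)
    (hode : ∀ w, 4 * w * φ'' w + 2 * Fintype.card ι * φ' w + φ w = 0) (z : ℂ) (x : ι → ℝ) :
    -(∑ j, ε j * fderiv ℝ (fun y ↦ fderiv ℝ (fun y ↦ φ (z * signedSumSq ε y)) y
        (Pi.single j 1)) x (Pi.single j 1)) = z * φ (z * signedSumSq ε x) := by
  rw [sum_mul_fderiv_fderiv_comp_signedSumSq hε hφ hφ' z x]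
  linear_combination -z * hode (z * signedSumSq ε x)

end SignedSumSq

theorem ultrahyperbolic_eigenfunction_general (p q : ℕ) (z : ℂ) :
    let d := p + q
    let E : ℂ → ℂ := fun w =>
      Complex.I ^ q / (2 ^ d * ((Real.pi ^ ((d : ℝ) / 2) : ℝ) : ℂ)) *
        ∑' k : ℕ, (-w / 4) ^ k / ((k.factorial : ℂ) * Complex.Gamma ((k : ℂ) + (d : ℂ) / 2))
    let u : (Fin d → ℝ) → ℂ := fun x =>
      E (z * ∑ j : Fin d, (if (j : ℕ) < p then (1 : ℂ) else -1) * (((x j) ^ 2 : ℝ) : ℂ))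
    ∀ x : Fin d → ℝ,
      -(∑ j : Fin d, (if (j : ℕ) < p then (1 : ℂ) else -1) *
          fderiv ℝ (fun y => fderiv ℝ u y (Pi.single j 1)) x (Pi.single j 1)) = z * u x := by
  intro d E u x
  set C : ℂ := Complex.I ^ q / (2 ^ d * ((Real.pi ^ ((d : ℝ) / 2) : ℝ) : ℂ))
  set F : ℂ → ℂ → ℂ := fun b w ↦ regularizedHGFun 0 {b} (-1 / 4 * w) with hF
  have hE : E = fun w ↦ C * F (d / 2) w := by
    ext w
    show C * _ = C * FormalMultilinearSeries.ofScalarsSum _ _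
    rw [FormalMultilinearSeries.ofScalars_sum_eq]
    refine congrArg _ (tsum_congr fun k ↦ ?_)
    rw [regularizedHGFunCoeff_zero_singleton, add_comm ((d : ℂ) / 2), smul_eq_mul]
    ring
  have hF' (b w : ℂ) : HasDerivAt (F b) (-1 / 4 * F (b + 1) w) w :=
    hasDerivAt_regularizedHGFun_zero_singleton_const_mul _ _ w
  have hE' (w : ℂ) : HasDerivAt E (C * (-1 / 4 * F (d / 2 + 1) w)) w := by
    rw [hE]
    exact (hF' _ w).const_mul C
  have hE'' (w : ℂ) : HasDerivAt (fun w ↦ C * (-1 / 4 * F (d / 2 + 1) w))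
      (C * (-1 / 4 * (-1 / 4 * F (d / 2 + 1 + 1) w))) w :=
    ((hF' _ w).const_mul _).const_mul C
  have hode (w : ℂ) : 4 * w * (C * (-1 / 4 * (-1 / 4 * F (d / 2 + 1 + 1) w))) +
      2 * Fintype.card (Fin d) * (C * (-1 / 4 * F (d / 2 + 1) w)) + E w = 0 := by
    simp only [hE, hF, add_assoc ((d : ℂ) / 2), one_add_one_eq_two, Fintype.card_fin]
    linear_combination -C * regularizedHGFun_zero_singleton_contiguous ((d : ℂ) / 2) (-1 / 4 * w)
  exact neg_sum_mul_fderiv_fderiv_comp_signedSumSq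
    (ε := fun j : Fin d ↦ if (j : ℕ) < p then 1 else -1) (fun j ↦ by split_ifs <;> norm_num)
    hE' hE'' hode z x

/-- For `p + q = d ≥ 1` and any `z ∈ ℂ`, the function `u(x) = E(z(x'² - x''²))` with
`E(w) = (i^q/(2^d π^{d/2})) Σ_k (-w/4)^k/(k! Γ(k+d/2))` satisfies the eigenequation
`(-□ - z)u = 0` for the ultra-hyperbolic operator
`□ = ∂₁² + ⋯ + ∂_p² - ∂_{p+1}² - ⋯ - ∂_d²`. -/
theorem ultrahyperbolic_eigenfunction (p q : ℕ) (hd : 1 ≤ p + q) (z : ℂ) :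
    let d := p + q
    let E : ℂ → ℂ := fun w =>
      Complex.I ^ q / (2 ^ d * ((Real.pi ^ ((d : ℝ) / 2) : ℝ) : ℂ)) *
        ∑' k : ℕ, (-w / 4) ^ k / ((k.factorial : ℂ) * Complex.Gamma ((k : ℂ) + (d : ℂ) / 2))
    let u : (Fin d → ℝ) → ℂ := fun x =>
      E (z * ∑ j : Fin d, (if (j : ℕ) < p then (1 : ℂ) else -1) * (((x j) ^ 2 : ℝ) : ℂ))
    ∀ x : Fin d → ℝ,
      -(∑ j : Fin d, (if (j : ℕ) < p then (1 : ℂ) else -1) *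
          fderiv ℝ (fun y => fderiv ℝ u y (Pi.single j 1)) x (Pi.single j 1)) = z * u x :=
  ultrahyperbolic_eigenfunction_general p q z
end
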